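/- arXiv:1304.0223 — 3 statements merged into one kernel-verified Lean document; each statement's English description precedes it below -/
import Mathlib

section
/- Every invertible 4×4 real matrix A with rows (1, a₀₁, a₀₂, a₀₃), (0, a₁₁, 0, a₁₃), (0, 0, a₁₁, a₂₃), (0, 0, 0, a₃₃) (with a₁₁ ≠ 0, a₃₃ ≠ 0) factors uniquely as the product D·S·H·T, where D = diag(1, 1, 1, a₃₃/a₁₁), S is the matrix with rows (1,0,0,0), (0,1,0,a₁₃/a₁₁), (0,0,1,a₂₃/a₁₁), (0,0,0,1), H = diag(1, a₁₁, a₁₁, a₁₁), and T has rows (1, a₀₁, a₀₂, a₀₃), (0,1,0,0), (0,0,1,0), (0,0,0,1). -/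
section TypeIMatrix

variable {R : Type*} [CommSemiring R]

theorem typeI_matrix_inj {a01 a02 a03 a11 a13 a23 a33 b01 b02 b03 b11 b13 b23 b33 : R} :
    !![1, a01, a02, a03; 0, a11, 0, a13; 0, 0, a11, a23; 0, 0, 0, a33] =
        !![1, b01, b02, b03; 0, b11, 0, b13; 0, 0, b11, b23; 0, 0, 0, b33] ↔
      a01 = b01 ∧ a02 = b02 ∧ a03 = b03 ∧ a11 = b11 ∧ a13 = b13 ∧ a23 = b23 ∧ a33 = b33 := by
  simp only [EmbeddingLike.apply_eq_iff_eq, Matrix.vecCons_inj]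
  tauto

theorem perspective_mul_shear_mul_stretch_mul_translation (d s13 s23 h t01 t02 t03 : R) :
    !![1, 0, 0, 0; 0, 1, 0, 0; 0, 0, 1, 0; 0, 0, 0, d] *
        !![1, 0, 0, 0; 0, 1, 0, s13; 0, 0, 1, s23; 0, 0, 0, 1] *
        !![1, 0, 0, 0; 0, h, 0, 0; 0, 0, h, 0; 0, 0, 0, h] *
        !![1, t01, t02, t03; 0, 1, 0, 0; 0, 0, 1, 0; 0, 0, 0, 1] =
      !![1, t01, t02, t03; 0, h, 0, h * s13; 0, 0, h, h * s23; 0, 0, 0, d * h] := by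
  ext i j
  fin_cases i <;> fin_cases j <;> simp [Matrix.mul_apply, Fin.sum_univ_four] <;> ring

end TypeIMatrix

theorem stmt3_general (a01 a02 a03 a11 a13 a23 a33 : ℝ) (h11 : a11 ≠ 0) :
    ((!![1, a01, a02, a03; 0, a11, 0, a13; 0, 0, a11, a23; 0, 0, 0, a33] :
        Matrix (Fin 4) (Fin 4) ℝ) =
      !![1, 0, 0, 0; 0, 1, 0, 0; 0, 0, 1, 0; 0, 0, 0, a33 / a11] *
      !![1, 0, 0, 0; 0, 1, 0, a13 / a11; 0, 0, 1, a23 / a11; 0, 0, 0, 1] *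
      !![1, 0, 0, 0; 0, a11, 0, 0; 0, 0, a11, 0; 0, 0, 0, a11] *
      !![1, a01, a02, a03; 0, 1, 0, 0; 0, 0, 1, 0; 0, 0, 0, 1]) ∧
    ∀ d s13 s23 h t01 t02 t03 : ℝ,
      (!![1, a01, a02, a03; 0, a11, 0, a13; 0, 0, a11, a23; 0, 0, 0, a33] :
          Matrix (Fin 4) (Fin 4) ℝ) =
        !![1, 0, 0, 0; 0, 1, 0, 0; 0, 0, 1, 0; 0, 0, 0, d] *
        !![1, 0, 0, 0; 0, 1, 0, s13; 0, 0, 1, s23; 0, 0, 0, 1] *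
        !![1, 0, 0, 0; 0, h, 0, 0; 0, 0, h, 0; 0, 0, 0, h] *
        !![1, t01, t02, t03; 0, 1, 0, 0; 0, 0, 1, 0; 0, 0, 0, 1] →
      d = a33 / a11 ∧ s13 = a13 / a11 ∧ s23 = a23 / a11 ∧ h = a11 ∧
        t01 = a01 ∧ t02 = a02 ∧ t03 = a03 := by
  refine ⟨?_, fun d s13 s23 h t01 t02 t03 hA => ?_⟩
  · rw [perspective_mul_shear_mul_stretch_mul_translation, typeI_matrix_inj]
    simp [mul_div_cancel₀ _ h11, div_mul_cancel₀ _ h11]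
  · rw [perspective_mul_shear_mul_stretch_mul_translation, typeI_matrix_inj] at hA
    obtain ⟨rfl, rfl, rfl, rfl, h13, h23, h33⟩ := hA
    refine ⟨?_, ?_, ?_, rfl, rfl, rfl, rfl⟩
    · rw [h33, mul_div_cancel_right₀ _ h11]
    · rw [h13, mul_div_cancel_left₀ _ h11]
    · rw [h23, mul_div_cancel_left₀ _ h11]

/-- Every invertible matrix of type (I) (so `a₁₁ ≠ 0`, `a₃₃ ≠ 0`) factors uniquely as
`D·S·H·T` (perspective affinity, shear, stretching, translation) as in (4). -/
theorem stmt3 (a01 a02 a03 a11 a13 a23 a33 : ℝ) (h11 : a11 ≠ 0) (h33 : a33 ≠ 0) :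
    ((!![1, a01, a02, a03; 0, a11, 0, a13; 0, 0, a11, a23; 0, 0, 0, a33] :
        Matrix (Fin 4) (Fin 4) ℝ) =
      !![1, 0, 0, 0; 0, 1, 0, 0; 0, 0, 1, 0; 0, 0, 0, a33 / a11] *
      !![1, 0, 0, 0; 0, 1, 0, a13 / a11; 0, 0, 1, a23 / a11; 0, 0, 0, 1] *
      !![1, 0, 0, 0; 0, a11, 0, 0; 0, 0, a11, 0; 0, 0, 0, a11] *
      !![1, a01, a02, a03; 0, 1, 0, 0; 0, 0, 1, 0; 0, 0, 0, 1]) ∧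
    ∀ d s13 s23 h t01 t02 t03 : ℝ,
      (!![1, a01, a02, a03; 0, a11, 0, a13; 0, 0, a11, a23; 0, 0, 0, a33] :
          Matrix (Fin 4) (Fin 4) ℝ) =
        !![1, 0, 0, 0; 0, 1, 0, 0; 0, 0, 1, 0; 0, 0, 0, d] *
        !![1, 0, 0, 0; 0, 1, 0, s13; 0, 0, 1, s23; 0, 0, 0, 1] *
        !![1, 0, 0, 0; 0, h, 0, 0; 0, 0, h, 0; 0, 0, 0, h] *
        !![1, t01, t02, t03; 0, 1, 0, 0; 0, 0, 1, 0; 0, 0, 0, 1] →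
      d = a33 / a11 ∧ s13 = a13 / a11 ∧ s23 = a23 / a11 ∧ h = a11 ∧
        t01 = a01 ∧ t02 = a02 ∧ t03 = a03 :=
  stmt3_general a01 a02 a03 a11 a13 a23 a33 h11
end

section
/- The cubic parabola D° = {t + t²ε + t³ε² : t ∈ ℝ} ⊆ L is the proper part of a chain of the Laguerre geometry Σ(ℝ, L): explicitly, the image of the standard chain ℙ(ℝ) under the projectivity of ℙ(L) induced by the matrix with rows (1, ε²), (ε, 1) ∈ GL₂(L) (or a suitable matrix in GL₂(L)) has proper part D°, and its unique improper point is L(1, −ε). -/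
open Polynomial

/-- The 3-dimensional real algebra `L = ℝ[X]/(X³)`. -/
noncomputable abbrev L : Type := ℝ[X] ⧸ Ideal.span {(X : ℝ[X]) ^ 3}

/-- `ε`, the residue class of `X` in `L`, so `ε³ = 0`. -/
noncomputable def eps : L := Ideal.Quotient.mk _ X

/-- The natural right action of a `2×2` matrix over `L` on a row pair `(u,v) ∈ L²`. -/
noncomputable def act (p : L × L) (M : Matrix (Fin 2) (Fin 2) L) : L × L :=
  (p.1 * M 0 0 + p.2 * M 1 0, p.1 * M 0 1 + p.2 * M 1 1)

/-- Two admissible pairs represent the same point of `ℙ(L)` iff they differ by a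
unit factor. -/
def pEq (p q : L × L) : Prop := ∃ u : Lˣ, q = ((u : L) * p.1, (u : L) * p.2)

/-! The shear `(u, v) ↦ (u, v - u ε)` sends `(t, 1)` to `(t, 1 - tε)`; since `ε³ = 0`, the
scalar `1 - tε` is a unit with inverse `1 + tε + t²ε²`, and rescaling by that inverse gives
`(t + t²ε + t³ε², 1)`. The improper point `(1, 0)` goes to `(1, -ε)`. -/

lemma eps_pow_three : eps ^ 3 = 0 := by
  rw [eps, ← map_pow, Ideal.Quotient.eq_zero_iff_mem]
  exact Ideal.subset_span rfl

lemma act_unitriangular (p : L × L) (b : L) : act p !![1, b; 0, 1] = (p.1, p.1 * b + p.2) := by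
  simp [act]

lemma pEq_of_isUnit {p q : L × L} {u : L} (hu : IsUnit u) (hq : q = (u * p.1, u * p.2)) :
    pEq p q :=
  ⟨hu.unit, hq⟩

lemma pEq_act_real_point (t : ℝ) :
    pEq (act (t • (1 : L), 1) !![1, -eps; 0, 1])
      (t • (1 : L) + (t ^ 2) • eps + (t ^ 3) • eps ^ 2, 1) := by
  have hsmul (s : ℝ) (x : L) : s • x = algebraMap ℝ L s * x := Algebra.smul_def s x
  set c : L := algebraMap ℝ L t
  have hinv : (1 + c * eps + c ^ 2 * eps ^ 2) * (1 - c * eps) = 1 := by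
    linear_combination (-c ^ 3) * eps_pow_three
  refine pEq_of_isUnit (IsUnit.of_mul_eq_one _ hinv) ?_
  simp only [act_unitriangular, hsmul, map_pow, mul_one, Prod.mk.injEq]
  constructor
  · ring
  · linear_combination -hinv

/-- The cubic parabola `D° = {t + t²ε + t³ε²}` is the proper part of a chain:
there is a matrix `M ∈ GL₂(L)` whose induced projectivity maps the standard chain
`{L(t,1) : t ∈ ℝ} ∪ {L(1,0)}` onto `{L(t + t²ε + t³ε², 1) : t ∈ ℝ} ∪ {L(1,-ε)}`,
so the unique improper point of this chain is `L(1,-ε)`. -/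
theorem stmt16 :
    ∃ M : Matrix (Fin 2) (Fin 2) L, IsUnit M.det ∧
      (∀ p ∈ ({q : L × L | ∃ t : ℝ, q = (t • (1 : L), 1)} ∪
          {((1 : L), (0 : L))} : Set (L × L)),
        ∃ q ∈ ({q : L × L |
              ∃ t : ℝ, q = (t • (1 : L) + (t ^ 2) • eps + (t ^ 3) • eps ^ 2, 1)} ∪
            {((1 : L), -eps)} : Set (L × L)), pEq (act p M) q) ∧
      (∀ q ∈ ({q : L × L |
            ∃ t : ℝ, q = (t • (1 : L) + (t ^ 2) • eps + (t ^ 3) • eps ^ 2, 1)} ∪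
          {((1 : L), -eps)} : Set (L × L)),
        ∃ p ∈ ({q : L × L | ∃ t : ℝ, q = (t • (1 : L), 1)} ∪
          {((1 : L), (0 : L))} : Set (L × L)), pEq (act p M) q) := by
  have hdet : IsUnit (!![1, -eps; 0, 1] : Matrix (Fin 2) (Fin 2) L).det := by
    simp [Matrix.det_fin_two_of]
  have himproper : pEq (act (1, 0) !![1, -eps; 0, 1]) (1, -eps) :=
    pEq_of_isUnit isUnit_one (by simp [act_unitriangular])
  refine ⟨!![1, -eps; 0, 1], hdet, ?_, ?_⟩
  · rintro p (⟨t, rfl⟩ | rfl)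
    · exact ⟨_, Or.inl ⟨t, rfl⟩, pEq_act_real_point t⟩
    · exact ⟨_, Or.inr rfl, himproper⟩
  · rintro q (⟨t, rfl⟩ | rfl)
    · exact ⟨_, Or.inl ⟨t, rfl⟩, pEq_act_real_point t⟩
    · exact ⟨_, Or.inr rfl, himproper⟩
end

section
/- Let C° = {t + (a₀₂ + a₁₂t)ε + (a₀₃ + a₁₃t + a₃₃t²)ε² : t ∈ ℝ} and C̃° = {t + (ã₀₂ + ã₁₂t)ε + (ã₀₃ + ã₁₃t + ã₃₃t²)ε² : t ∈ ℝ} be two admissible parabolas in L (a₃₃ ≠ 0, ã₃₃ ≠ 0). The parallel projection of C̃° onto the plane of C° along a non-vertical singular direction (i.e., along ε + λε² for some λ ∈ ℝ) is a translate of C° if and only if a₃₃ = ã₃₃. -/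
/-!
Projecting along `(0,1,λ)` onto the plane `x₂ = a₀₂ + a₁₂x₁` adds `λ` times the `x₂`-offset of
the two curves to the third coordinate, so the projection is again a graph over `x₁` whose third
coordinate is a quadratic in `t` with leading coefficient `ã₃₃`. A translate of `C°` is a graph of
the same kind with leading coefficient `a₃₃`; comparing second differences forces `a₃₃ = ã₃₃`,
and conversely, since `a₃₃ ≠ 0`, completing the square turns one such quadratic into a shift
of the other plus a constant.
-/

theorem image_translate_graph {α β γ : Type*} [AddGroup α] [Add β] [Add γ]
    (f : α → β) (g : α → γ) (v : α × β × γ) :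
    (fun p : α × β × γ => (p.1 + v.1, p.2.1 + v.2.1, p.2.2 + v.2.2)) ''
        {p | ∃ t, p = (t, f t, g t)} =
      {p | ∃ t, p = (t, f (t - v.1) + v.2.1, g (t - v.1) + v.2.2)} := by
  ext p
  constructor
  · rintro ⟨_, ⟨t, rfl⟩, rfl⟩
    exact ⟨t + v.1, by simp⟩
  · rintro ⟨t, rfl⟩
    exact ⟨_, ⟨t - v.1, rfl⟩, by simp⟩

theorem graph_eq_graph_iff {α β γ : Type*} {f f' : α → β} {g g' : α → γ} :
    {p : α × β × γ | ∃ t, p = (t, f t, g t)} = {p | ∃ t, p = (t, f' t, g' t)} ↔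
      f = f' ∧ g = g' := by
  refine ⟨fun h => ?_, by rintro ⟨rfl, rfl⟩; rfl⟩
  have hcoord (t : α) : f t = f' t ∧ g t = g' t := by
    obtain ⟨s, hs⟩ : ∃ s, (t, f t, g t) = (s, f' s, g' s) := (Set.ext_iff.mp h _).mp ⟨t, rfl⟩
    simp only [Prod.mk.injEq] at hs
    obtain ⟨rfl, hs⟩ := hs
    exact hs
  exact ⟨funext fun t => (hcoord t).1, funext fun t => (hcoord t).2⟩

theorem exists_shift_quadratic {K : Type*} [Field K] [NeZero (2 : K)] {a : K} (ha : a ≠ 0)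
    (b b' c c' : K) : ∃ s w : K, ∀ t,
      a * t ^ 2 + b * t + c = a * (t - s) ^ 2 + b' * (t - s) + c' + w := by
  refine ⟨(b' - b) / (2 * a), c - c' - a * ((b' - b) / (2 * a)) ^ 2 + b' * ((b' - b) / (2 * a)),
    fun t => ?_⟩
  field_simp
  ring

theorem stmt18_general (a02 a12 a03 a13 a33 b02 b12 b03 b13 b33 lam : ℝ)
    (ha : a33 ≠ 0) :
    (∃ v : ℝ × ℝ × ℝ,
      {p : ℝ × ℝ × ℝ | ∃ t : ℝ, p = (t, a02 + a12 * t,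
          b03 + b13 * t + b33 * t ^ 2 +
            lam * ((a02 + a12 * t) - (b02 + b12 * t)))} =
      (fun p : ℝ × ℝ × ℝ => (p.1 + v.1, p.2.1 + v.2.1, p.2.2 + v.2.2)) ''
        {p : ℝ × ℝ × ℝ | ∃ t : ℝ, p = (t, a02 + a12 * t,
            a03 + a13 * t + a33 * t ^ 2)}) ↔
    a33 = b33 := by
  simp only [image_translate_graph, graph_eq_graph_iff, funext_iff]
  constructor
  · rintro ⟨v, -, hq⟩
    -- the second difference at `0` of a quadratic is twice its leading coefficient
    linear_combination (2 * hq 0 - hq 1 - hq (-1)) / 2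
  · rintro rfl
    obtain ⟨s, w, hsw⟩ :=
      exists_shift_quadratic ha (b13 + lam * (a12 - b12)) a13 (b03 + lam * (a02 - b02)) a03
    exact ⟨(s, a12 * s, w), fun t => by ring, fun t => by linear_combination hsw t⟩

/-- `L` viewed as real affine 3-space with coordinates `(x₁,x₂,x₃)` for
`x₁ + x₂ε + x₃ε²`. For two admissible parabolas `C°` (coefficients `a..`) and `C̃°`
(coefficients `b..`), the parallel projection of `C̃°` onto the plane of `C°` along
the non-vertical singular direction `ε + λε²` (i.e. `(0,1,λ)`) is a translate of
`C°` if and only if `a₃₃ = ã₃₃`. -/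
theorem stmt18 (a02 a12 a03 a13 a33 b02 b12 b03 b13 b33 lam : ℝ)
    (ha : a33 ≠ 0) (hb : b33 ≠ 0) :
    (∃ v : ℝ × ℝ × ℝ,
      {p : ℝ × ℝ × ℝ | ∃ t : ℝ, p = (t, a02 + a12 * t,
          b03 + b13 * t + b33 * t ^ 2 +
            lam * ((a02 + a12 * t) - (b02 + b12 * t)))} =
      (fun p : ℝ × ℝ × ℝ => (p.1 + v.1, p.2.1 + v.2.1, p.2.2 + v.2.2)) ''
        {p : ℝ × ℝ × ℝ | ∃ t : ℝ, p = (t, a02 + a12 * t,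
            a03 + a13 * t + a33 * t ^ 2)}) ↔
    a33 = b33 :=
  stmt18_general a02 a12 a03 a13 a33 b02 b12 b03 b13 b33 lam ha
end
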